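/- arXiv:0901.4652 — 2 statements merged into one kernel-verified Lean document; each statement's English description precedes it below -/
import Mathlib

section
/- Every Limaçon of Pascal is rational; that is, if C is a circle (zero set of ‖ȳ−P₀‖² = r² for some center P₀ ∈ K² and radius r ∈ K with r ≠ 0) and the focus A lies on C, then the conchoid 𝔠(C) is rational. -/
noncomputable section

namespace ConchoidPaper

open Polynomial

variable {K : Type*} [Field K]

/-- The squared norm `‖P‖² = b(P,P)` for the bilinear form
`b((x₁,x₂),(y₁,y₂)) = x₁y₁ + x₂y₂` on `K²`. -/
def normSq (P : K × K) : K := P.1 * P.1 + P.2 * P.2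

/-- The zero set in `K²` of a bivariate polynomial (variables `X 0 ↦ y₁`, `X 1 ↦ y₂`). -/
def zeroSet (f : MvPolynomial (Fin 2) K) : Set (K × K) :=
  {x | MvPolynomial.eval ![x.1, x.2] f = 0}

/-- Zariski closure in `K²`: the set of points at which every polynomial
vanishing identically on `S` vanishes. -/
def zClosure (S : Set (K × K)) : Set (K × K) :=
  {x | ∀ f : MvPolynomial (Fin 2) K,
      (∀ y ∈ S, MvPolynomial.eval ![y.1, y.2] f = 0) →
      MvPolynomial.eval ![x.1, x.2] f = 0}

/-- `S` is Zariski closed in `K²`. -/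
def IsZClosed (S : Set (K × K)) : Prop := zClosure S ⊆ S

/-- `S` is irreducible for the Zariski topology on `K²`: it is nonempty and is not
covered by two Zariski-closed sets unless it is contained in one of them. -/
def IsZIrreducible (S : Set (K × K)) : Prop :=
  S.Nonempty ∧
  ∀ F₁ F₂ : Set (K × K), IsZClosed F₁ → IsZClosed F₂ → S ⊆ F₁ ∪ F₂ → S ⊆ F₁ ∨ S ⊆ F₂

/-- `M` is an irreducible component of `X`: a maximal Zariski-closed irreducible subset. -/
def IsComponent (X M : Set (K × K)) : Prop :=
  M ⊆ X ∧ IsZClosed M ∧ IsZIrreducible M ∧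
  ∀ M' : Set (K × K), M' ⊆ X → IsZClosed M' → IsZIrreducible M' → M ⊆ M' → M' = M

/-- `Ω` is a nonempty Zariski-dense subset of `M`. -/
def IsDenseIn (Ω M : Set (K × K)) : Prop :=
  Ω.Nonempty ∧ Ω ⊆ M ∧ M ⊆ zClosure Ω

/-- The conchoid incidence variety `B(C)` of the curve `C = zeroSet f` from the focus `A`
at distance `d`: triples `(x̄, ȳ, λ)` with `f(ȳ) = 0`, `‖x̄ − ȳ‖² = d²` and
`x̄ = A + λ(ȳ − A)`. -/
def incidence (f : MvPolynomial (Fin 2) K) (A : K × K) (d : K) :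
    Set ((K × K) × (K × K) × K) :=
  {w | w.2.1 ∈ zeroSet f ∧ normSq (w.1 - w.2.1) = d ^ 2 ∧ w.1 = A + w.2.2 • (w.2.1 - A)}

/-- The conchoid `𝔠(C,A,d)`: the Zariski closure of `π₁(B(C))`. -/
def conchoid (f : MvPolynomial (Fin 2) K) (A : K × K) (d : K) : Set (K × K) :=
  zClosure (Prod.fst '' incidence f A d)

/-- `S` is one of the two isotropic lines `y₁ ± √(-1) y₂ = 0`. -/
def IsIsotropicLine (S : Set (K × K)) : Prop :=
  ∃ s : K, s ^ 2 = -1 ∧ S = {y : K × K | y.1 + s * y.2 = 0}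

/-- `S` is a line passing through the point `A`. -/
def IsLineThrough (S : Set (K × K)) (A : K × K) : Prop :=
  ∃ u v : K, (u ≠ 0 ∨ v ≠ 0) ∧
    S = {y : K × K | u * (y.1 - A.1) + v * (y.2 - A.2) = 0}

/-- `S` is a line in `K²`. -/
def IsLine (S : Set (K × K)) : Prop :=
  ∃ u v w : K, (u ≠ 0 ∨ v ≠ 0) ∧ S = {y : K × K | u * y.1 + v * y.2 + w = 0}

/-- The circle of center `A` and radius `d`, i.e. `‖ȳ − A‖² = d²`. -/
def circleSet (A : K × K) (d : K) : Set (K × K) := {y : K × K | normSq (y - A) = d ^ 2}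

/-- The point of `K²` obtained by evaluating the pair of rational functions `P` at `t`. -/
def ratPoint (P : RatFunc K × RatFunc K) (t : K) : K × K :=
  (P.1.num.eval t / P.1.denom.eval t, P.2.num.eval t / P.2.denom.eval t)

/-- `t` avoids the poles of both components of `P`. -/
def PolesAvoided (P : RatFunc K × RatFunc K) (t : K) : Prop :=
  P.1.denom.eval t ≠ 0 ∧ P.2.denom.eval t ≠ 0

/-- The image of the pair of rational functions `P`, poles avoided. -/
def paramImage (P : RatFunc K × RatFunc K) : Set (K × K) :=
  {x | ∃ t : K, PolesAvoided P t ∧ x = ratPoint P t}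

/-- `P ∈ K(t)²` is a rational parametrization of the set `S ⊆ K²`: its components are
not both constant, its image lies in `S`, and its image is Zariski dense in `S`. -/
def IsParamOf (S : Set (K × K)) (P : RatFunc K × RatFunc K) : Prop :=
  (¬ ∃ c : K × K, P.1 = RatFunc.C c.1 ∧ P.2 = RatFunc.C c.2) ∧
  paramImage P ⊆ S ∧ S ⊆ zClosure (paramImage P)

/-- `S` is rational: it admits a rational parametrization. -/
def IsRationalSet (S : Set (K × K)) : Prop := ∃ P : RatFunc K × RatFunc K, IsParamOf S P

/-- `P` is proper: `K(P₁,P₂) = K(t)`. -/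
def IsProper (P : RatFunc K × RatFunc K) : Prop :=
  IntermediateField.adjoin K {P.1, P.2} = ⊤

/-- `P` is at rational distance to the focus `A` (`A`-rdf):
`(P₁ − a)² + (P₂ − b)² = m(t)²` for some rational function `m`. -/
def IsRDF (A : K × K) (P : RatFunc K × RatFunc K) : Prop :=
  ∃ m : RatFunc K, (P.1 - RatFunc.C A.1) ^ 2 + (P.2 - RatFunc.C A.2) ^ 2 = m ^ 2

/-- A field is trivially a normalized GCD monoid; this makes `K[x₁]` a normalized GCD
monoid, so that primitive parts w.r.t. `x₂` of polynomials in `K[x₁][x₂]` make sense. -/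
noncomputable local instance : NormalizedGCDMonoid K := by
  classical exact inferInstance

/-- The numerator of `−2x₂(P₁(x₁) − a) + (x₂² − 1)(P₂(x₁) − b)`, written as a polynomial
in `x₂` (outer variable) with coefficients in `K[x₁]` (inner variable). -/
def repNum (A : K × K) (P : RatFunc K × RatFunc K) : Polynomial (Polynomial K) :=
  Polynomial.C ((P.2 - RatFunc.C A.2).num * (P.1 - RatFunc.C A.1).denom) *
      (Polynomial.X ^ 2 - 1) +
    Polynomial.C (-2 * ((P.1 - RatFunc.C A.1).num * (P.2 - RatFunc.C A.2).denom)) *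
      Polynomial.X

/-- Defining polynomial of the reparametrizing curve `𝔊(P)`: the primitive part with
respect to `x₂` of the numerator of `−2x₂(P₁(x₁) − a) + (x₂² − 1)(P₂(x₁) − b)`. -/
def repPoly (A : K × K) (P : RatFunc K × RatFunc K) : Polynomial (Polynomial K) :=
  (repNum A P).primPart

/-- Zero set in the `(x₁,x₂)`-plane of `g ∈ K[x₁][x₂]` (`x₂` outer, `x₁` inner). -/
def zeroSetP (g : Polynomial (Polynomial K)) : Set (K × K) :=
  {x | Polynomial.eval₂ (Polynomial.evalRingHom x.1) x.2 g = 0}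

/-- The reparametrizing curve `𝔊(P)` has at least one rational component, i.e. some
irreducible factor of its defining polynomial defines a rational curve. -/
def repHasRatComponent (A : K × K) (P : RatFunc K × RatFunc K) : Prop :=
  ∃ g : Polynomial (Polynomial K), Irreducible g ∧ g ∣ repPoly A P ∧
    IsRationalSet (zeroSetP g)

/-- The reparametrizing curve `𝔊(P)` is rational: its defining polynomial is
irreducible and its zero set admits a rational parametrization. -/
def repIsRational (A : K × K) (P : RatFunc K × RatFunc K) : Prop :=
  Irreducible (repPoly A P) ∧ IsRationalSet (zeroSetP (repPoly A P))

/-- Composition `P ∘ φ` of rational functions. -/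
def comp (P φ : RatFunc K) : RatFunc K :=
  Polynomial.aeval φ P.num / Polynomial.aeval φ P.denom

/-- `M` is a simple component of the conchoid: an irreducible component possessing a
nonempty Zariski-dense subset `Ω` such that each `Q ∈ Ω` has exactly one point in
`π₂(π₁⁻¹(Q))`. -/
def IsSimpleComponent (f : MvPolynomial (Fin 2) K) (A : K × K) (d : K)
    (M : Set (K × K)) : Prop :=
  IsComponent (conchoid f A d) M ∧
  ∃ Ω : Set (K × K), IsDenseIn Ω M ∧
    ∀ Q ∈ Ω, ∃! y : K × K, ∃ l : K, (Q, y, l) ∈ incidence f A d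

/-!
A point of the circle through `A` with centre `A + n`, `‖n‖ = r`, is `y = A + 2s(s n - c n^⊥)`
with `s² + c² = 1`, and then `‖y - A‖ = 2rs`. Parametrizing the unit circle by
`s = 2t/(1+t²)`, `c = (1-t²)/(1+t²)` makes both `y` and the distance `‖y - A‖` rational in `t`,
so the conchoid points `A + (1 + d/(2rs))(y - A)` form one rational curve; the two points at
distance `d` from `y` correspond to `t` and `-1/t`. Every point of `π₁(B(C))` lies on this curve
and infinitely many of its points lie in `π₁(B(C))`, so the conchoid is its Zariski closure,
which is irreducible because it is the image of the irreducible line.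
-/

lemma subset_zClosure (S : Set (K × K)) : S ⊆ zClosure S := fun x hx _ hg => hg x hx

lemma zClosure_mono {S T : Set (K × K)} (h : S ⊆ T) : zClosure S ⊆ zClosure T :=
  fun _ hx g hg => hx g fun y hy => hg y (h hy)

lemma zClosure_zClosure (S : Set (K × K)) : zClosure (zClosure S) = zClosure S :=
  Set.Subset.antisymm (fun _ hx g hg => hx g fun _ hy => hy g hg) (subset_zClosure _)

lemma IsZClosed.zClosure_subset {S F : Set (K × K)} (hF : IsZClosed F) (h : S ⊆ F) :
    zClosure S ⊆ F :=
  (zClosure_mono h).trans hF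

lemma RatFunc.eval_algebraMap_div_algebraMap {p q : K[X]} {t : K} (hq : q.eval t ≠ 0) :
    RatFunc.eval (RingHom.id K) t (algebraMap K[X] (RatFunc K) p / algebraMap _ _ q) =
      p.eval t / q.eval t := by
  have hq0 : q ≠ 0 := fun h => hq (by simp [h])
  have hdenom : ((algebraMap K[X] (RatFunc K) p / algebraMap _ _ q).denom).eval t ≠ 0 :=
    fun h => hq (eval_eq_zero_of_dvd_of_eval_eq_zero (RatFunc.denom_div_dvd p q) h)
  rw [eq_div_iff hq]
  have key := RatFunc.eval_mul (RingHom.id K) t hdenom (y := algebraMap _ _ q) (by simp)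
  rwa [div_mul_cancel₀ _ (RatFunc.algebraMap_ne_zero hq0), RatFunc.eval_algebraMap,
    RatFunc.eval_algebraMap, eq_comm] at key

/-- Evaluation at `t` is a ring homomorphism on the rational functions without pole at `t`. -/
lemma RatFunc.eval_aeval {σ : Type*} {P : σ → RatFunc K} {t : K}
    (hP : ∀ i, (P i).denom.eval t ≠ 0) (g : MvPolynomial σ K) :
    (MvPolynomial.aeval P g).denom.eval t ≠ 0 ∧
      RatFunc.eval (RingHom.id K) t (MvPolynomial.aeval P g) =
        MvPolynomial.eval (fun i => RatFunc.eval (RingHom.id K) t (P i)) g := by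
  induction g using MvPolynomial.induction_on with
  | C c => simp [RatFunc.algebraMap_eq_C]
  | add g h hg hh =>
    rw [map_add, map_add, RatFunc.eval_add _ _ hg.1 hh.1, hg.2, hh.2]
    exact ⟨fun h0 => mul_ne_zero hg.1 hh.1
      (by simpa using eval_eq_zero_of_dvd_of_eval_eq_zero (RatFunc.denom_add_dvd _ _) h0), rfl⟩
  | mul_X g i hg =>
    rw [map_mul, map_mul, MvPolynomial.aeval_X, MvPolynomial.eval_X,
      RatFunc.eval_mul _ _ hg.1 (hP i), hg.2]
    exact ⟨fun h0 => mul_ne_zero hg.1 (hP i)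
      (by simpa using eval_eq_zero_of_dvd_of_eval_eq_zero (RatFunc.denom_mul_dvd _ _) h0), rfl⟩

lemma RatFunc.eq_zero_of_eval_eq_zero {x : RatFunc K} {T : Set K} (hT : T.Infinite)
    (h : ∀ t ∈ T, RatFunc.eval (RingHom.id K) t x = 0) : x = 0 := by
  by_contra hx
  have hroots : T ⊆ {t | x.num.IsRoot t} ∪ {t | x.denom.IsRoot t} := fun t ht =>
    div_eq_zero_iff.mp (h t ht)
  exact hT (((finite_setOfPred_isRoot (RatFunc.num_ne_zero hx)).union
    (finite_setOfPred_isRoot (RatFunc.denom_ne_zero x))).subset hroots)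

section Parametrization

variable {P : RatFunc K × RatFunc K}

lemma eval_ratPoint {t : K} (ht : PolesAvoided P t) (g : MvPolynomial (Fin 2) K) :
    MvPolynomial.eval ![(ratPoint P t).1, (ratPoint P t).2] g =
      RatFunc.eval (RingHom.id K) t (MvPolynomial.aeval ![P.1, P.2] g) := by
  rw [(RatFunc.eval_aeval (fun i => by fin_cases i; exacts [ht.1, ht.2]) g).2]
  congr 2
  funext i
  fin_cases i <;> rfl

lemma aeval_eq_zero_of_eval_ratPoint {T : Set K} (hT : T.Infinite)
    (hTP : ∀ t ∈ T, PolesAvoided P t) {g : MvPolynomial (Fin 2) K}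
    (hg : ∀ t ∈ T, MvPolynomial.eval ![(ratPoint P t).1, (ratPoint P t).2] g = 0) :
    MvPolynomial.aeval ![P.1, P.2] g = 0 :=
  RatFunc.eq_zero_of_eval_eq_zero hT fun t ht =>
    (eval_ratPoint (hTP t ht) g).symm.trans (hg t ht)

lemma eval_eq_zero_of_mem_paramImage {g : MvPolynomial (Fin 2) K}
    (hg : MvPolynomial.aeval ![P.1, P.2] g = 0) {x : K × K} (hx : x ∈ paramImage P) :
    MvPolynomial.eval ![x.1, x.2] g = 0 := by
  obtain ⟨t, ht, rfl⟩ := hx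
  rw [eval_ratPoint ht, hg, RatFunc.eval_zero]

lemma paramImage_subset_zClosure_image {T : Set K} (hT : T.Infinite)
    (hTP : ∀ t ∈ T, PolesAvoided P t) : paramImage P ⊆ zClosure (ratPoint P '' T) :=
  fun _ hx _ hg => eval_eq_zero_of_mem_paramImage
    (aeval_eq_zero_of_eval_ratPoint hT hTP fun t ht => hg _ ⟨t, ht, rfl⟩) hx

lemma infinite_setOf_polesAvoided [Infinite K] (P : RatFunc K × RatFunc K) :
    {t | PolesAvoided P t}.Infinite := by
  refine (finite_setOfPred_isRoot (mul_ne_zero (RatFunc.denom_ne_zero P.1)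
    (RatFunc.denom_ne_zero P.2))).infinite_compl.mono fun t ht => ?_
  simpa [PolesAvoided, not_or] using ht

lemma isZIrreducible_zClosure_paramImage [Infinite K] (P : RatFunc K × RatFunc K) :
    IsZIrreducible (zClosure (paramImage P)) := by
  set T := {t | PolesAvoided P t}
  have hT : T.Infinite := infinite_setOf_polesAvoided P
  obtain ⟨t₀, ht₀⟩ := hT.nonempty
  refine ⟨⟨ratPoint P t₀, subset_zClosure _ ⟨t₀, ht₀, rfl⟩⟩, fun F₁ F₂ hF₁ hF₂ hcover => ?_⟩
  have hsplit : T = {t ∈ T | ratPoint P t ∈ F₁} ∪ {t ∈ T | ratPoint P t ∈ F₂} := by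
    ext t
    refine ⟨fun ht => ?_, fun ht => ht.elim (·.1) (·.1)⟩
    rcases hcover (subset_zClosure _ ⟨t, ht, rfl⟩) with h | h
    exacts [Or.inl ⟨ht, h⟩, Or.inr ⟨ht, h⟩]
  have hclosed {F : Set (K × K)} (hF : IsZClosed F)
      (hinf : {t ∈ T | ratPoint P t ∈ F}.Infinite) : zClosure (paramImage P) ⊆ F :=
    hF.zClosure_subset <| (paramImage_subset_zClosure_image hinf fun _ ht => ht.1).trans <|
      hF.zClosure_subset <| Set.image_subset_iff.mpr fun _ ht => ht.2
  rcases Set.infinite_union.mp (hsplit ▸ hT) with h | h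
  exacts [Or.inl (hclosed hF₁ h), Or.inr (hclosed hF₂ h)]

lemma zClosure_eq_zClosure_paramImage {S : Set (K × K)} {T : Set K} (hT : T.Infinite)
    (hTP : ∀ t ∈ T, PolesAvoided P t) (hTS : ratPoint P '' T ⊆ S) (hS : S ⊆ paramImage P) :
    zClosure S = zClosure (paramImage P) :=
  (zClosure_mono hS).antisymm <| (zClosure_mono
    ((paramImage_subset_zClosure_image hT hTP).trans (zClosure_mono hTS))).trans
    (zClosure_zClosure S).subset

lemma not_isConst_of_ratPoint_ne {t t' : K} (h : ratPoint P t ≠ ratPoint P t') :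
    ¬ ∃ c : K × K, P.1 = RatFunc.C c.1 ∧ P.2 = RatFunc.C c.2 := by
  rintro ⟨c, h₁, h₂⟩
  simp [ratPoint, h₁, h₂] at h

lemma ratPoint_div {p₁ p₂ q : K[X]} {t : K} (hq : q.eval t ≠ 0) :
    PolesAvoided (algebraMap K[X] (RatFunc K) p₁ / algebraMap _ _ q,
      algebraMap K[X] (RatFunc K) p₂ / algebraMap _ _ q) t ∧
    ratPoint (algebraMap K[X] (RatFunc K) p₁ / algebraMap _ _ q,
      algebraMap K[X] (RatFunc K) p₂ / algebraMap _ _ q) t =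
      (p₁.eval t / q.eval t, p₂.eval t / q.eval t) :=
  ⟨⟨fun h => hq (eval_eq_zero_of_dvd_of_eval_eq_zero (RatFunc.denom_div_dvd p₁ q) h),
    fun h => hq (eval_eq_zero_of_dvd_of_eval_eq_zero (RatFunc.denom_div_dvd p₂ q) h)⟩,
    Prod.ext (RatFunc.eval_algebraMap_div_algebraMap hq)
      (RatFunc.eval_algebraMap_div_algebraMap hq)⟩

end Parametrization

lemma normSq_smul (k : K) (v : K × K) : normSq (k • v) = k ^ 2 * normSq v := by
  simp only [normSq, Prod.smul_fst, Prod.smul_snd, smul_eq_mul]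
  ring

lemma normSq_sub_comm (P Q : K × K) : normSq (P - Q) = normSq (Q - P) := by
  simp only [normSq, Prod.fst_sub, Prod.snd_sub]
  ring

lemma exists_tan_half [NeZero (2 : K)] {s c : K} (hs : s ≠ 0) (hsc : s ^ 2 + c ^ 2 = 1) :
    ∃ t : K, 1 + t ^ 2 ≠ 0 ∧ s * (1 + t ^ 2) = 2 * t ∧ c * (1 + t ^ 2) = 1 - t ^ 2 := by
  have hc : 1 + c ≠ 0 := fun h => hs (pow_eq_zero_iff two_ne_zero |>.mp
    (by linear_combination hsc + (1 - c) * h))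
  have hu : (1 + (s / (1 + c)) ^ 2) * (1 + c) = 2 := by
    field_simp
    linear_combination hsc
  refine ⟨s / (1 + c), fun h => (two_ne_zero : (2 : K) ≠ 0) (by rw [← hu, h, zero_mul]), ?_, ?_⟩
  · field_simp
    linear_combination hsc
  · field_simp
    linear_combination (c + 1) * hsc

/-- For `s² + c² = 1`, the point `A + chord n s c` runs over the circle through `A` with centre
`A + n`; `s` is the sine of the angle between the chord and the tangent at `A`. -/
def chord (n : K × K) (s c : K) : K × K :=
  (2 * s * (s * n.1 - c * n.2), 2 * s * (s * n.2 + c * n.1))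

lemma normSq_chord {n : K × K} {s c : K} (hsc : s ^ 2 + c ^ 2 = 1) :
    normSq (chord n s c) = 4 * s ^ 2 * normSq n := by
  simp only [normSq, chord]
  linear_combination 4 * s ^ 2 * (n.1 ^ 2 + n.2 ^ 2) * hsc

lemma normSq_chord_sub {n : K × K} {s c : K} (hsc : s ^ 2 + c ^ 2 = 1) :
    normSq (chord n s c - n) = normSq n := by
  simp only [normSq, chord, Prod.fst_sub, Prod.snd_sub]
  linear_combination 4 * s ^ 2 * (n.1 ^ 2 + n.2 ^ 2) * hsc

lemma exists_eq_chord [NeZero (2 : K)] {n z : K × K} {r s : K} (hr : r ≠ 0) (hs : s ≠ 0)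
    (hn : normSq n = r ^ 2) (hzn : normSq (z - n) = r ^ 2) (hz : normSq z = 4 * r ^ 2 * s ^ 2) :
    ∃ c : K, s ^ 2 + c ^ 2 = 1 ∧ z = chord n s c := by
  simp only [normSq, Prod.fst_sub, Prod.snd_sub] at hn hzn hz
  -- `z` and `0` both lie on the circle of centre `n`, so `‖z‖² = 2 ⟪z, n⟫`
  have hzn' : z.1 * n.1 + z.2 * n.2 = 2 * r ^ 2 * s ^ 2 :=
    mul_left_cancel₀ (two_ne_zero : (2 : K) ≠ 0) (by linear_combination hn - hzn + hz)
  refine ⟨(z.2 * n.1 - z.1 * n.2) / (2 * r ^ 2 * s), ?_, Prod.ext ?_ ?_⟩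
  · field_simp
    linear_combination (z.1 * z.1 + z.2 * z.2) * hn + r ^ 2 * hz
      - (z.1 * n.1 + z.2 * n.2 + 2 * r ^ 2 * s ^ 2) * hzn'
  · simp only [chord]
    field_simp
    linear_combination -z.1 * hn + n.1 * hzn'
  · simp only [chord]
    field_simp
    linear_combination -z.2 * hn + n.2 * hzn'

lemma infinite_setOf_ne_zero_and_one_add_sq_ne_zero [Infinite K] :
    {t : K | t ≠ 0 ∧ 1 + t ^ 2 ≠ 0}.Infinite := by
  have hp : (X * (1 + X ^ 2) : K[X]) ≠ 0 :=
    mul_ne_zero X_ne_zero fun h => by simpa using congrArg (eval 0) h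
  exact (finite_setOfPred_isRoot hp).infinite_compl.mono fun t ht => by simpa [not_or] using ht

def limaconNum (a u v r d : K) : K[X] :=
  C a * (1 + X ^ 2) ^ 2 + C r⁻¹ * (C d * X ^ 2 + C (4 * r) * X + C d) *
    (C (2 * u) * X + C v * (X ^ 2 - 1))

/-- The point `A + l • chord n s c` with `s = 2t/(1+t²)`, `c = (1-t²)/(1+t²)` and
`2rs(l-1) = d`, written as a rational function of `t`. -/
def limaconParam (A n : K × K) (r d : K) : RatFunc K × RatFunc K :=
  (algebraMap K[X] (RatFunc K) (limaconNum A.1 n.1 n.2 r d) /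
      algebraMap K[X] (RatFunc K) ((1 + X ^ 2) ^ 2),
    algebraMap K[X] (RatFunc K) (limaconNum A.2 n.2 (-n.1) r d) /
      algebraMap K[X] (RatFunc K) ((1 + X ^ 2) ^ 2))

lemma eval_limaconNum_div {a u v r d s c l t : K} (hr : r ≠ 0) (hu : 1 + t ^ 2 ≠ 0)
    (hst : s * (1 + t ^ 2) = 2 * t) (hct : c * (1 + t ^ 2) = 1 - t ^ 2)
    (hl : 2 * r * s * (l - 1) = d) :
    (limaconNum a u v r d).eval t / ((1 + X ^ 2) ^ 2 : K[X]).eval t =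
      a + l * (2 * s * (s * u - c * v)) := by
  simp only [limaconNum, eval_add, eval_mul, eval_C, eval_pow, eval_X, eval_one, eval_sub]
  field_simp
  linear_combination (-(1 + t ^ 2) * hl - 2 * r * hst) * (2 * t * u + v * (t ^ 2 - 1))
    + 2 * r * s * l * (1 + t ^ 2) * (-u * hst + v * hct)

lemma polesAvoided_limaconParam {A n : K × K} {r d t : K} (hu : 1 + t ^ 2 ≠ 0) :
    PolesAvoided (limaconParam A n r d) t :=
  (ratPoint_div (by simpa using hu)).1

lemma ratPoint_limaconParam {A n : K × K} {r d s c l t : K} (hr : r ≠ 0) (hu : 1 + t ^ 2 ≠ 0)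
    (hst : s * (1 + t ^ 2) = 2 * t) (hct : c * (1 + t ^ 2) = 1 - t ^ 2)
    (hl : 2 * r * s * (l - 1) = d) :
    ratPoint (limaconParam A n r d) t = A + l • chord n s c := by
  refine (ratPoint_div (by simpa using hu)).2.trans (Prod.ext ?_ ?_)
  · exact eval_limaconNum_div hr hu hst hct hl
  · simpa [chord, add_comm (s * n.2)] using
      eval_limaconNum_div (a := A.2) (u := n.2) (v := -n.1) hr hu hst hct hl

section Limacon

variable [NeZero (2 : K)] {f : MvPolynomial (Fin 2) K} {A P₀ : K × K} {r d : K}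

lemma ratPoint_limaconParam_mem_image_incidence (hC : zeroSet f = circleSet P₀ r)
    (hA : A ∈ circleSet P₀ r) (hr : r ≠ 0) {t : K} (ht : t ≠ 0) (hu : 1 + t ^ 2 ≠ 0) :
    ratPoint (limaconParam A (P₀ - A) r d) t ∈ Prod.fst '' incidence f A d := by
  obtain ⟨s, hst⟩ : ∃ s : K, s * (1 + t ^ 2) = 2 * t := ⟨_, div_mul_cancel₀ _ hu⟩
  obtain ⟨c, hct⟩ : ∃ c : K, c * (1 + t ^ 2) = 1 - t ^ 2 := ⟨_, div_mul_cancel₀ _ hu⟩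
  have hs : s ≠ 0 := by
    rintro rfl
    exact mul_ne_zero two_ne_zero ht (by linear_combination -hst)
  have hsc : s ^ 2 + c ^ 2 = 1 := mul_right_cancel₀ (pow_ne_zero 2 hu) <| by
    linear_combination (s * (1 + t ^ 2) + 2 * t) * hst + (c * (1 + t ^ 2) + 1 - t ^ 2) * hct
  obtain ⟨l, hl⟩ : ∃ l : K, 2 * r * s * (l - 1) = d :=
    ⟨1 + d / (2 * r * s), by field_simp; ring⟩
  rw [ratPoint_limaconParam hr hu hst hct hl]
  refine ⟨(_, A + chord (P₀ - A) s c, l), ⟨?_, ?_, by simp⟩, rfl⟩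
  · rw [hC]
    show normSq (A + chord (P₀ - A) s c - P₀) = r ^ 2
    rw [show A + chord (P₀ - A) s c - P₀ = chord (P₀ - A) s c - (P₀ - A) by abel,
      normSq_chord_sub hsc, normSq_sub_comm]
    exact hA
  · show normSq (A + l • chord (P₀ - A) s c - (A + chord (P₀ - A) s c)) = d ^ 2
    rw [show A + l • chord (P₀ - A) s c - (A + chord (P₀ - A) s c)
        = (l - 1) • chord (P₀ - A) s c by module, normSq_smul, normSq_chord hsc,
      normSq_sub_comm, show normSq (A - P₀) = r ^ 2 from hA, ← hl]
    ring

lemma image_incidence_subset_paramImage_limaconParam (hC : zeroSet f = circleSet P₀ r)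
    (hA : A ∈ circleSet P₀ r) (hr : r ≠ 0) (hd : d ≠ 0) :
    Prod.fst '' incidence f A d ⊆ paramImage (limaconParam A (P₀ - A) r d) := by
  rintro _ ⟨⟨x, y, l⟩, ⟨hy, hxy, hx⟩, rfl⟩
  dsimp only at hy hxy hx ⊢
  subst hx
  rw [hC] at hy
  have hn : normSq (P₀ - A) = r ^ 2 := (normSq_sub_comm _ _).trans hA
  have hxy' : (l - 1) ^ 2 * normSq (y - A) = d ^ 2 := by
    rw [← normSq_smul, ← hxy]
    congr 1
    module
  have hl : l - 1 ≠ 0 := by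
    rintro h
    rw [h] at hxy'
    exact hd (pow_eq_zero_iff two_ne_zero |>.mp (by linear_combination -hxy'))
  obtain ⟨s, hsd⟩ : ∃ s : K, 2 * r * s * (l - 1) = d :=
    ⟨d / (2 * r * (l - 1)), by field_simp⟩
  have hs : s ≠ 0 := by
    rintro rfl
    exact hd (by linear_combination -hsd)
  have hz : normSq (y - A) = 4 * r ^ 2 * s ^ 2 := mul_left_cancel₀ (pow_ne_zero 2 hl) <| by
    linear_combination hxy' - (2 * r * s * (l - 1) + d) * hsd
  have hzn : normSq (y - A - (P₀ - A)) = r ^ 2 := by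
    rw [sub_sub_sub_cancel_right]
    exact hy
  obtain ⟨c, hsc, hyc⟩ := exists_eq_chord hr hs hn hzn hz
  obtain ⟨t, hu, hst, hct⟩ := exists_tan_half hs hsc
  exact ⟨t, polesAvoided_limaconParam hu,
    by rw [ratPoint_limaconParam hr hu hst hct hsd, ← hyc]⟩

lemma limaconParam_not_const {n : K × K} (hr : r ≠ 0) (hd : d ≠ 0) (hn : normSq n = r ^ 2) :
    ¬ ∃ c : K × K, (limaconParam A n r d).1 = RatFunc.C c.1 ∧
      (limaconParam A n r d).2 = RatFunc.C c.2 := by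
  have hu₁ : (1 : K) + 1 ^ 2 ≠ 0 := by
    rw [one_pow, one_add_one_eq_two]
    exact two_ne_zero
  refine not_isConst_of_ratPoint_ne (t := 1) (t' := -1) ?_
  rw [ratPoint_limaconParam (s := 1) (c := 0) (l := 1 + d / (2 * r)) hr hu₁ (by ring) (by ring)
      (by field_simp; ring),
    ratPoint_limaconParam (s := -1) (c := 0) (l := 1 - d / (2 * r)) hr (by simpa using hu₁)
      (by ring) (by ring) (by field_simp; ring)]
  intro h
  have h₁ := congrArg Prod.fst h
  have h₂ := congrArg Prod.snd h
  simp only [chord, Prod.fst_add, Prod.snd_add, Prod.smul_fst, Prod.smul_snd, smul_eq_mul,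
    add_right_inj] at h₁ h₂
  field_simp at h₁ h₂
  have h2d : 2 * d ≠ 0 := mul_ne_zero two_ne_zero hd
  have hn₁ : n.1 = 0 := (mul_eq_zero.mp (by linear_combination h₁)).resolve_left h2d
  have hn₂ : n.2 = 0 := (mul_eq_zero.mp (by linear_combination h₂)).resolve_left h2d
  exact hr (pow_eq_zero_iff two_ne_zero |>.mp (by simp [← hn, normSq, hn₁, hn₂]))

lemma conchoid_eq_zClosure_paramImage_limaconParam [Infinite K]
    (hC : zeroSet f = circleSet P₀ r) (hA : A ∈ circleSet P₀ r) (hr : r ≠ 0) (hd : d ≠ 0) :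
    conchoid f A d = zClosure (paramImage (limaconParam A (P₀ - A) r d)) :=
  zClosure_eq_zClosure_paramImage infinite_setOf_ne_zero_and_one_add_sq_ne_zero
    (fun _ ht => polesAvoided_limaconParam ht.2)
    (Set.image_subset_iff.mpr fun _ ht =>
      ratPoint_limaconParam_mem_image_incidence hC hA hr ht.1 ht.2)
    (image_incidence_subset_paramImage_limaconParam hC hA hr hd)

end Limacon

theorem limacon_of_pascal_is_rational_general
    [CharZero K]
    (f : MvPolynomial (Fin 2) K) (A : K × K) (d : K)
    (hd : d ≠ 0)
    (P₀ : K × K) (r : K) (hr : r ≠ 0) (hC : zeroSet f = circleSet P₀ r)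
    (hA : A ∈ zeroSet f) :
    IsZIrreducible (conchoid f A d) ∧ IsRationalSet (conchoid f A d) := by
  rw [hC] at hA
  rw [conchoid_eq_zClosure_paramImage_limaconParam hC hA hr hd]
  exact ⟨isZIrreducible_zClosure_paramImage _, _,
    limaconParam_not_const hr hd ((normSq_sub_comm _ _).trans hA), subset_zClosure _, subset_rfl⟩

/-- Corollary 5 of the paper. Every Limaçon of Pascal is rational:
if `C` is a circle and `A ∈ C`, then `𝔠(C)` is rational. -/
theorem limacon_of_pascal_is_rational
    [IsAlgClosed K] [CharZero K]
    (f : MvPolynomial (Fin 2) K) (A : K × K) (d : K)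
    (hf : Irreducible f) (hd : d ≠ 0)
    (P₀ : K × K) (r : K) (hr : r ≠ 0) (hC : zeroSet f = circleSet P₀ r)
    (hA : A ∈ zeroSet f)
    (hcirc : zeroSet f ≠ circleSet A d) :
    IsZIrreducible (conchoid f A d) ∧ IsRationalSet (conchoid f A d) :=
  limacon_of_pascal_is_rational_general f A d hd P₀ r hr hC hA

end ConchoidPaper
end
end

section
/- Let P(t) = (p₁(t)/p(t), p₂(t)/p(t)) be a proper rational parametrization of C with gcd(p₁, p₂, p) = 1, and let A₀ = (a₀, b₀) ∈ K². If the polynomial (p₁(t) − a₀·p(t))² + (p₂(t) − b₀·p(t))² is a constant of K, then C is a line passing through A₀. Consequently, if C is not a line through A₀, then (p₁(t) − a₀·p(t))² + (p₂(t) − b₀·p(t))² is a nonconstant polynomial in t. -/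
noncomputable section

namespace ConchoidPaper

open Polynomial

variable {K : Type*} [Field K]

/-! With `s² = -1`, `q₁² + q₂² = (q₁ + s q₂)(q₁ - s q₂)`. Two polynomials with constant product
are linearly dependent over `K` (either one vanishes or both are constants), and so, since
`2 ≠ 0`, are `q₁ = p₁ - a₀p` and `q₂ = p₂ - b₀p`. Such a dependence puts the image of `P`, hence
its Zariski closure `C`, on a line through `A₀`. Conversely the image of a nonconstant
parametrization is infinite, so `f` restricted to that line has infinitely many roots and
vanishes identically. -/

theorem exists_C_mul_add_C_mul_eq_zero_of_mul_eq_C {R : Type*} [CommRing R] [IsDomain R]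
    {x y : R[X]} {c : R} (h : x * y = C c) :
    ∃ u v : R, (u ≠ 0 ∨ v ≠ 0) ∧ C u * x + C v * y = 0 := by
  rcases eq_or_ne x 0 with rfl | hx
  · exact ⟨1, 0, Or.inl one_ne_zero, by simp⟩
  rcases eq_or_ne y 0 with rfl | hy
  · exact ⟨0, 1, Or.inr one_ne_zero, by simp⟩
  have hdeg : x.natDegree + y.natDegree = 0 := by rw [← natDegree_mul hx hy, h, natDegree_C]
  obtain ⟨α, rfl⟩ := natDegree_eq_zero.mp (Nat.eq_zero_of_add_eq_zero_right hdeg)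
  obtain ⟨β, rfl⟩ := natDegree_eq_zero.mp (Nat.eq_zero_of_add_eq_zero_left hdeg)
  have hα : α ≠ 0 := by rintro rfl; exact hx C_0
  exact ⟨β, -α, Or.inr (neg_ne_zero.mpr hα), by rw [map_neg]; ring⟩

theorem exists_C_mul_add_C_mul_eq_zero_of_sq_add_sq_eq_C [IsAlgClosed K] [NeZero (2 : K)]
    {q₁ q₂ : K[X]} {c : K} (h : q₁ ^ 2 + q₂ ^ 2 = C c) :
    ∃ u v : K, (u ≠ 0 ∨ v ≠ 0) ∧ C u * q₁ + C v * q₂ = 0 := by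
  obtain ⟨s, hs⟩ := IsAlgClosed.exists_pow_nat_eq (-1 : K) two_pos
  have hs0 : s ≠ 0 := by rintro rfl; simp at hs
  have hCs : C s ^ 2 = -1 := by rw [← map_pow, hs, map_neg, map_one]
  have hfac : (q₁ + C s * q₂) * (q₁ - C s * q₂) = C c := by
    linear_combination h - q₂ ^ 2 * hCs
  obtain ⟨u, v, huv, hrel⟩ := exists_C_mul_add_C_mul_eq_zero_of_mul_eq_C hfac
  refine ⟨u + v, (u - v) * s, ?_, by rw [← hrel, map_add, map_mul, map_sub]; ring⟩
  by_contra! h0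
  have huv' : u - v = 0 := (mul_eq_zero.mp h0.2).resolve_right hs0
  have hu : u = 0 := by
    simpa [NeZero.ne] using (by linear_combination h0.1 + huv' : (2 : K) * u = 0)
  have hv : v = 0 := by linear_combination h0.1 - hu
  exact huv.elim (· hu) (· hv)

theorem ratPoint_eq_eval (P : RatFunc K × RatFunc K) (t : K) :
    ratPoint P t = (P.1.eval (RingHom.id K) t, P.2.eval (RingHom.id K) t) := by
  simp [ratPoint, RatFunc.eval, eval₂_id]

theorem eval_C_mul_add_C_mul {Q₁ Q₂ : RatFunc K} {t : K} (h₁ : Q₁.denom.eval t ≠ 0)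
    (h₂ : Q₂.denom.eval t ≠ 0) (u v : K) :
    (RatFunc.C u * Q₁ + RatFunc.C v * Q₂).eval (RingHom.id K) t =
      u * Q₁.eval (RingHom.id K) t + v * Q₂.eval (RingHom.id K) t := by
  have hdenom : ∀ (w : K) (Q : RatFunc K), Q.denom.eval t ≠ 0 →
      (RatFunc.C w * Q).denom.eval₂ (RingHom.id K) t ≠ 0 := fun w Q hQ =>
    mt (eval₂_eq_zero_of_dvd_of_eval₂_eq_zero _ _ (RatFunc.denom_mul_dvd _ _))
      (by simpa [eval₂_id] using hQ)
  have h₁' : Q₁.denom.eval₂ (RingHom.id K) t ≠ 0 := by rwa [eval₂_id]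
  have h₂' : Q₂.denom.eval₂ (RingHom.id K) t ≠ 0 := by rwa [eval₂_id]
  rw [RatFunc.eval_add _ _ (hdenom u Q₁ h₁) (hdenom v Q₂ h₂),
    RatFunc.eval_mul _ _ (by simp) h₁', RatFunc.eval_mul _ _ (by simp) h₂',
    RatFunc.eval_C, RatFunc.eval_C, RingHom.id_apply, RingHom.id_apply]

theorem finite_setOf_eval_eq {Q : RatFunc K} {x : K} (hQ : Q ≠ RatFunc.C x) :
    {t | Q.denom.eval t ≠ 0 ∧ Q.eval (RingHom.id K) t = x}.Finite := by
  have hr : Q.num - C x * Q.denom ≠ 0 := by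
    refine fun h0 => hQ ?_
    rw [← RatFunc.num_div_denom Q, sub_eq_zero.mp h0, map_mul, RatFunc.algebraMap_C,
      mul_div_cancel_right₀ _ (RatFunc.algebraMap_ne_zero (RatFunc.denom_ne_zero Q))]
  refine (finite_setOfPred_isRoot hr).subset fun t ⟨hd, hv⟩ => ?_
  rw [RatFunc.eval, eval₂_id, eval₂_id, div_eq_iff hd] at hv
  simp [hv]

theorem infinite_image_eval {Q : RatFunc K} (hQ : ∀ c, Q ≠ RatFunc.C c) {T : Set K}
    (hT : T.Infinite) (hTQ : ∀ t ∈ T, Q.denom.eval t ≠ 0) :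
    ((fun t => Q.eval (RingHom.id K) t) '' T).Infinite := by
  refine fun hfin => hT ((hfin.biUnion fun x _ => finite_setOf_eval_eq (hQ x)).subset ?_)
  exact fun t ht => Set.mem_biUnion ⟨t, ht, rfl⟩ ⟨hTQ t ht, rfl⟩

theorem paramImage_infinite [Infinite K] {P : RatFunc K × RatFunc K}
    (hP : ¬∃ c : K × K, P.1 = RatFunc.C c.1 ∧ P.2 = RatFunc.C c.2) :
    (paramImage P).Infinite := by
  set T := {t | PolesAvoided P t}
  have hT : T.Infinite := by
    refine ((finite_setOfPred_isRoot (RatFunc.denom_ne_zero P.1)).union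
      (finite_setOfPred_isRoot (RatFunc.denom_ne_zero P.2))).infinite_compl.mono ?_
    intro t ht
    simpa [T, PolesAvoided, IsRoot, not_or] using ht
  have himage : paramImage P = ratPoint P '' T := by
    ext x; simp [paramImage, T, eq_comm]
  rw [himage]
  by_cases h₁ : ∀ c, P.1 ≠ RatFunc.C c
  · refine Set.Infinite.of_image Prod.fst ?_
    rw [Set.image_image]
    simpa [ratPoint_eq_eval] using infinite_image_eval h₁ hT fun t ht => ht.1
  · have h₂ : ∀ c, P.2 ≠ RatFunc.C c := by
      push Not at h₁
      obtain ⟨c₁, hc₁⟩ := h₁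
      exact fun c₂ hc₂ => hP ⟨(c₁, c₂), hc₁, hc₂⟩
    refine Set.Infinite.of_image Prod.snd ?_
    rw [Set.image_image]
    simpa [ratPoint_eq_eval] using infinite_image_eval h₂ hT fun t ht => ht.2

def lineThrough (A : K × K) (u v : K) : Set (K × K) :=
  {y | u * (y.1 - A.1) + v * (y.2 - A.2) = 0}

theorem lineThrough_eq_zeroSet (A : K × K) (u v : K) :
    lineThrough A u v = zeroSet (MvPolynomial.C u * (MvPolynomial.X 0 - MvPolynomial.C A.1) +
      MvPolynomial.C v * (MvPolynomial.X 1 - MvPolynomial.C A.2)) := by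
  ext y; simp [lineThrough, zeroSet]

theorem zClosure_subset_zeroSet {S : Set (K × K)} {g : MvPolynomial (Fin 2) K}
    (h : S ⊆ zeroSet g) : zClosure S ⊆ zeroSet g :=
  fun _ hx => hx g h

theorem lineThrough_eq_range {A : K × K} {u v : K} (huv : u ≠ 0 ∨ v ≠ 0) :
    lineThrough A u v = Set.range fun s => (A.1 + v * s, A.2 - u * s) := by
  ext y
  simp only [lineThrough, Set.mem_ofPred_eq, Set.mem_range]
  refine ⟨fun hy => ?_, ?_⟩
  · rcases eq_or_ne v 0 with rfl | hv
    · have hu : u ≠ 0 := huv.resolve_right (· rfl)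
      have hy₁ : y.1 = A.1 := by simpa [hu, sub_eq_zero] using hy
      exact ⟨(A.2 - y.2) / u, Prod.ext (by simp [hy₁]) (by field_simp; ring)⟩
    · refine ⟨(y.1 - A.1) / v, Prod.ext (by field_simp; ring) ?_⟩
      field_simp
      linear_combination -hy
  · rintro ⟨s, rfl⟩
    ring

theorem lineThrough_subset_zeroSet {A : K × K} {u v : K} (huv : u ≠ 0 ∨ v ≠ 0)
    {f : MvPolynomial (Fin 2) K} (h : (lineThrough A u v ∩ zeroSet f).Infinite) :
    lineThrough A u v ⊆ zeroSet f := by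
  set F : K[X] := MvPolynomial.aeval ![C A.1 + C v * X, C A.2 - C u * X] f
  have hF : ∀ s, F.eval s = MvPolynomial.eval ![A.1 + v * s, A.2 - u * s] f := by
    intro s
    rw [show F = _ from MvPolynomial.aeval_def _ f, MvPolynomial.polynomial_eval_eval₂]
    congr 1
    · ext; simp
    · funext i; fin_cases i <;> simp
  rw [lineThrough_eq_range huv] at h ⊢
  have hF0 : F = 0 := by
    refine eq_zero_of_infinite_isRoot F ((h.preimage Set.inter_subset_left).mono ?_)
    intro s hs
    simpa [IsRoot, hF, zeroSet] using hs.2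
  rintro _ ⟨s, rfl⟩
  simpa [zeroSet, hF0] using (hF s).symm

theorem eq_lineThrough_of_isParamOf [Infinite K] {f : MvPolynomial (Fin 2) K}
    {P : RatFunc K × RatFunc K} (hparam : IsParamOf (zeroSet f) P) {A : K × K} {u v : K}
    (huv : u ≠ 0 ∨ v ≠ 0) (hP : paramImage P ⊆ lineThrough A u v) :
    zeroSet f = lineThrough A u v := by
  refine subset_antisymm ?_ (lineThrough_subset_zeroSet huv
    ((paramImage_infinite hparam.1).mono (Set.subset_inter hP hparam.2.1)))
  rw [lineThrough_eq_zeroSet] at hP ⊢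
  exact hparam.2.2.trans (zClosure_subset_zeroSet hP)

theorem paramImage_subset_lineThrough {p₁ p₂ p : K[X]} (hp : p ≠ 0) {P : RatFunc K × RatFunc K}
    (hP₁ : P.1 = algebraMap K[X] (RatFunc K) p₁ / algebraMap K[X] (RatFunc K) p)
    (hP₂ : P.2 = algebraMap K[X] (RatFunc K) p₂ / algebraMap K[X] (RatFunc K) p)
    {A : K × K} {u v : K} (hrel : C u * (p₁ - C A.1 * p) + C v * (p₂ - C A.2 * p) = 0) :
    paramImage P ⊆ lineThrough A u v := by
  have hrat : RatFunc.C u * P.1 + RatFunc.C v * P.2 = RatFunc.C (u * A.1 + v * A.2) := by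
    have h := congrArg (algebraMap K[X] (RatFunc K)) hrel
    simp only [map_add, map_mul, map_sub, map_zero, RatFunc.algebraMap_C] at h
    rw [hP₁, hP₂, map_add, map_mul, map_mul]
    field_simp [RatFunc.algebraMap_ne_zero hp]
    linear_combination h
  rintro _ ⟨t, ⟨h₁, h₂⟩, rfl⟩
  have h := congrArg (RatFunc.eval (RingHom.id K) t) hrat
  rw [eval_C_mul_add_C_mul h₁ h₂, RatFunc.eval_C, RingHom.id_apply] at h
  simp only [lineThrough, ratPoint_eq_eval, Set.mem_ofPred_eq]
  linear_combination h

theorem line_through_focus_of_constant_distance_polynomial_general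
    [IsAlgClosed K] [CharZero K]
    (f : MvPolynomial (Fin 2) K)
    (p₁ p₂ p : Polynomial K) (hp : p ≠ 0)
    (P : RatFunc K × RatFunc K)
    (hP₁ : P.1 = algebraMap (Polynomial K) (RatFunc K) p₁ /
        algebraMap (Polynomial K) (RatFunc K) p)
    (hP₂ : P.2 = algebraMap (Polynomial K) (RatFunc K) p₂ /
        algebraMap (Polynomial K) (RatFunc K) p)
    (hparam : IsParamOf (zeroSet f) P)
    (A₀ : K × K) :
    ((∃ c : K,
        (p₁ - Polynomial.C A₀.1 * p) ^ 2 + (p₂ - Polynomial.C A₀.2 * p) ^ 2 =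
          Polynomial.C c) →
       IsLineThrough (zeroSet f) A₀) ∧
    (¬ IsLineThrough (zeroSet f) A₀ →
       ∀ c : K,
         (p₁ - Polynomial.C A₀.1 * p) ^ 2 + (p₂ - Polynomial.C A₀.2 * p) ^ 2 ≠
           Polynomial.C c) := by
  have hline : (∃ c : K, (p₁ - C A₀.1 * p) ^ 2 + (p₂ - C A₀.2 * p) ^ 2 = C c) →
      IsLineThrough (zeroSet f) A₀ := by
    rintro ⟨c, hc⟩
    obtain ⟨u, v, huv, hrel⟩ := exists_C_mul_add_C_mul_eq_zero_of_sq_add_sq_eq_C hc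
    exact ⟨u, v, huv, eq_lineThrough_of_isParamOf hparam huv
      (paramImage_subset_lineThrough hp hP₁ hP₂ hrel)⟩
  exact ⟨hline, fun hnot c hc => hnot (hline ⟨c, hc⟩)⟩

/-- Lemma 4 of the paper. If `(p₁ − a₀p)² + (p₂ − b₀p)²` is a
constant, then `C` is a line through `A₀`; consequently if `C` is not a line through
`A₀`, this polynomial is nonconstant. -/
theorem line_through_focus_of_constant_distance_polynomial
    [IsAlgClosed K] [CharZero K]
    (f : MvPolynomial (Fin 2) K) (hf : Irreducible f)
    (p₁ p₂ p : Polynomial K) (hp : p ≠ 0)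
    (hgcd : ∀ q : Polynomial K, q ∣ p₁ → q ∣ p₂ → q ∣ p → IsUnit q)
    (P : RatFunc K × RatFunc K)
    (hP₁ : P.1 = algebraMap (Polynomial K) (RatFunc K) p₁ /
        algebraMap (Polynomial K) (RatFunc K) p)
    (hP₂ : P.2 = algebraMap (Polynomial K) (RatFunc K) p₂ /
        algebraMap (Polynomial K) (RatFunc K) p)
    (hparam : IsParamOf (zeroSet f) P) (hproper : IsProper P)
    (A₀ : K × K) :
    ((∃ c : K,
        (p₁ - Polynomial.C A₀.1 * p) ^ 2 + (p₂ - Polynomial.C A₀.2 * p) ^ 2 =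
          Polynomial.C c) →
       IsLineThrough (zeroSet f) A₀) ∧
    (¬ IsLineThrough (zeroSet f) A₀ →
       ∀ c : K,
         (p₁ - Polynomial.C A₀.1 * p) ^ 2 + (p₂ - Polynomial.C A₀.2 * p) ^ 2 ≠
           Polynomial.C c) :=
  line_through_focus_of_constant_distance_polynomial_general f p₁ p₂ p hp P hP₁ hP₂ hparam A₀

end ConchoidPaper
end
end
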